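/- arXiv:2602.08938 — 6 statements merged into one kernel-verified Lean document; each statement's English description precedes it below -/
import Mathlib

section
/- The BNN update leaves the simplex forward-invariant for small step sizes: if π ∈ Δ(A), u : A → ℝ, and 0 ≤ η ≤ 1/(1 + S(π)) where S(π) = ∑_{a'}[u(a') − ū]₊, then the updated vector π'(a) = π(a) + η·([u(a) − ū]₊ − π(a)·S(π)) satisfies π'(a) ≥ 0 for all a and ∑_a π'(a) = 1. -/
open Finset

theorem bnn_update_simplex_invariant {A : Type*} [Fintype A]
    (π u : A → ℝ) (hπ : ∀ a, 0 ≤ π a) (hsum : ∑ a : A, π a = 1)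
    (ubar : ℝ) (hubar : ubar = ∑ a : A, π a * u a)
    (S : ℝ) (hS : S = ∑ a' : A, max (u a' - ubar) 0)
    (η : ℝ) (hη0 : 0 ≤ η) (hη1 : η ≤ 1 / (1 + S))
    (π' : A → ℝ)
    (hπ' : ∀ a, π' a = π a + η * (max (u a - ubar) 0 - π a * S)) :
    (∀ a, 0 ≤ π' a) ∧ ∑ a : A, π' a = 1 := by
  have hS0 : 0 ≤ S := by
    rw [hS]; exact Finset.sum_nonneg fun a _ => le_max_right _ _
  have h1S : 0 < 1 + S := by linarith
  have hηS : η * S ≤ 1 := by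
    have h1 : η * S ≤ (1 / (1 + S)) * S := by
      exact mul_le_mul_of_nonneg_right hη1 hS0
    have h2 : (1 / (1 + S)) * S ≤ 1 := by
      rw [div_mul_eq_mul_div, one_mul, div_le_one h1S]; linarith
    linarith
  constructor
  · intro a
    rw [hπ' a]
    have h1 : 0 ≤ π a * (1 - η * S) :=
      mul_nonneg (hπ a) (by linarith)
    have h2 : 0 ≤ η * max (u a - ubar) 0 :=
      mul_nonneg hη0 (le_max_right _ _)
    nlinarith
  · have : ∑ a : A, π' a =
        ∑ a : A, π a + η * ((∑ a : A, max (u a - ubar) 0) - (∑ a : A, π a) * S) := by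
      rw [Finset.sum_congr rfl fun a _ => hπ' a]
      simp [Finset.sum_add_distrib, Finset.mul_sum, Finset.sum_sub_distrib, Finset.sum_mul,
        mul_sub]
    rw [this, hsum, ← hS]
    ring
end

section
/- At any rest point of the BNN dynamics, no action has strictly positive advantage: if π ∈ Δ(A) satisfies H(a;π) = 0 for all a, where H(a;π) = [u(a) − ū]₊ − π(a)·∑_{a'}[u(a') − ū]₊, then u(a) ≤ ū for all a ∈ A. -/
open Finset

theorem bnn_rest_point_is_nash {A : Type*} [Fintype A]
    (π u : A → ℝ) (hπ : ∀ a, 0 ≤ π a) (hsum : ∑ a : A, π a = 1)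
    (ubar : ℝ) (hubar : ubar = ∑ a : A, π a * u a)
    (hrest : ∀ a, max (u a - ubar) 0 - π a * ∑ a' : A, max (u a' - ubar) 0 = 0) :
    ∀ a, u a ≤ ubar := by
  by_contra h
  push_neg at h
  obtain ⟨a0, ha0⟩ := h
  set S := ∑ a' : A, max (u a' - ubar) 0 with hS
  have hmax : ∀ a, max (u a - ubar) 0 = π a * S := by
    intro a; have := hrest a; linarith
  have hzero : ∑ a : A, π a * (u a - ubar) = 0 := by
    have : ∑ a : A, π a * (u a - ubar) = (∑ a : A, π a * u a) - ubar * ∑ a : A, π a := by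
      rw [Finset.mul_sum, ← Finset.sum_sub_distrib]
      exact Finset.sum_congr rfl fun a _ => by ring
    rw [this, hsum, hubar]; ring
  have hSpos : 0 < S := by
    have h1 : max (u a0 - ubar) 0 ≤ S := by
      apply Finset.single_le_sum (f := fun a => max (u a - ubar) 0)
      · intro i _; exact le_max_right _ _
      · exact Finset.mem_univ a0
    have h2 : 0 < max (u a0 - ubar) 0 := lt_max_of_lt_left (by linarith)
    linarith
  have hsum2 : ∑ a : A, max (u a - ubar) 0 * (u a - ubar) = 0 := by
    calc ∑ a : A, max (u a - ubar) 0 * (u a - ubar)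
        = ∑ a : A, π a * S * (u a - ubar) := by
          apply Finset.sum_congr rfl; intro a _; rw [hmax]
      _ = S * ∑ a : A, π a * (u a - ubar) := by
          rw [Finset.mul_sum]; apply Finset.sum_congr rfl; intro a _; ring
      _ = 0 := by rw [hzero, mul_zero]
  have hpos : 0 < ∑ a : A, max (u a - ubar) 0 * (u a - ubar) := by
    apply Finset.sum_pos'
    · intro i _
      rcases le_or_gt (u i - ubar) 0 with hle | hlt
      · rw [max_eq_right hle, zero_mul]
      · exact le_of_lt (mul_pos (lt_max_of_lt_left hlt) hlt)
    · refine ⟨a0, Finset.mem_univ a0, ?_⟩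
      have hlt : 0 < u a0 - ubar := by linarith
      exact mul_pos (lt_max_of_lt_left hlt) hlt
  linarith
end

section
/- Structural bias bound: let A be a finite action set with |A| = n, π ∈ Δ(A), and let ũ(a) = u(a) + ξ(a) where the ξ(a) are integrable random variables with E[ξ(a)] = 0 and E[ξ(a)²] ≤ σ². Define the noisy BNN field Ĥ(a) = [ũ(a) − ū̃]₊ − π(a)∑_{a'}[ũ(a') − ū̃]₊ with ū̃ = ∑_{a'} π(a')ũ(a'), and the noiseless field H(a) analogously with u. Then the bias β(a) = E[Ĥ(a)] − H(a) satisfies |β(a)| ≤ 2(n−1)σ for every a (in particular ‖β‖_∞ = O(n σ)). -/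
open MeasureTheory Finset

private lemma abs_integral_le_of_sq {Ω : Type*} [MeasureSpace Ω]
    [IsProbabilityMeasure (volume : Measure Ω)]
    (f : Ω → ℝ) (σ : ℝ) (hσ : 0 ≤ σ) (hf : Integrable f)
    (hf2 : Integrable (fun ω => f ω ^ 2)) (h : ∫ ω, f ω ^ 2 ≤ σ ^ 2) :
    ∫ ω, |f ω| ≤ σ := by
  refine le_of_forall_pos_le_add fun ε hε => ?_
  set r : ℝ := σ + ε with hr
  have hr0 : 0 < r := by positivity
  have key : ∀ ω, |f ω| ≤ (f ω ^ 2 + r ^ 2) / (2 * r) := by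
    intro ω
    rw [le_div_iff₀ (by positivity)]
    nlinarith [sq_nonneg (|f ω| - r), sq_abs (f ω)]
  have hint2 : Integrable (fun ω => (f ω ^ 2 + r ^ 2) / (2 * r)) :=
    (hf2.add (integrable_const _)).div_const _
  calc ∫ ω, |f ω| ≤ ∫ ω, (f ω ^ 2 + r ^ 2) / (2 * r) := integral_mono hf.abs hint2 key
    _ = ((∫ ω, f ω ^ 2) + r ^ 2) / (2 * r) := by
        rw [integral_div, integral_add hf2 (integrable_const _), integral_const]
        simp
    _ ≤ (σ ^ 2 + r ^ 2) / (2 * r) := by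
        apply div_le_div_of_nonneg_right _ (by positivity)
        · linarith
    _ ≤ r := by
        rw [div_le_iff₀ (by positivity)]
        nlinarith [hε.le]

theorem bnn_structural_bias_bound
    {Ω : Type*} [MeasureSpace Ω] [IsProbabilityMeasure (volume : Measure Ω)]
    {A : Type*} [Fintype A] (n : ℕ) (hn : n = Fintype.card A)
    (π u : A → ℝ) (hπ : ∀ a, 0 ≤ π a) (hsum : ∑ a : A, π a = 1)
    (ξ : A → Ω → ℝ) (σ : ℝ) (hσ : 0 ≤ σ)
    (hint : ∀ a, Integrable (ξ a)) (hsq : ∀ a, Integrable (fun ω => ξ a ω ^ 2))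
    (hmean : ∀ a, ∫ ω, ξ a ω = 0) (hvar : ∀ a, ∫ ω, ξ a ω ^ 2 ≤ σ ^ 2)
    (utilde : A → Ω → ℝ) (hutilde : ∀ a ω, utilde a ω = u a + ξ a ω)
    (ubartilde : Ω → ℝ) (hubartilde : ∀ ω, ubartilde ω = ∑ a' : A, π a' * utilde a' ω)
    (ubar : ℝ) (hubar : ubar = ∑ a' : A, π a' * u a')
    (Hhat : A → Ω → ℝ)
    (hHhat : ∀ a ω, Hhat a ω =
      max (utilde a ω - ubartilde ω) 0 - π a * ∑ a' : A, max (utilde a' ω - ubartilde ω) 0)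
    (H : A → ℝ)
    (hH : ∀ a, H a = max (u a - ubar) 0 - π a * ∑ a' : A, max (u a' - ubar) 0)
    (hHhatInt : ∀ a, Integrable (Hhat a)) :
    ∀ a, |(∫ ω, Hhat a ω) - H a| ≤ 2 * (n - 1 : ℝ) * σ := by
  classical
  intro a
  -- basic facts
  have hπle : ∀ b, π b ≤ 1 := by
    intro b
    rw [← hsum]
    exact Finset.single_le_sum (fun i _ => hπ i) (mem_univ b)
  -- case n = 1
  rcases lt_or_ge (Fintype.card A) 2 with hcard | hcard
  · have hcard1 : Fintype.card A = 1 := by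
      have : 0 < Fintype.card A := Fintype.card_pos_iff.mpr ⟨a⟩
      omega
    obtain ⟨x, hx⟩ := Fintype.card_eq_one_iff.mp hcard1
    have huniv : (univ : Finset A) = {a} := by
      apply Finset.eq_singleton_iff_unique_mem.mpr
      exact ⟨mem_univ a, fun b _ => (hx b).trans (hx a).symm⟩
    have hπa : π a = 1 := by rw [← hsum, huniv, Finset.sum_singleton]
    have hH0 : H a = 0 := by rw [hH, huniv, Finset.sum_singleton, hπa]; ring
    have hHhat0 : ∀ ω, Hhat a ω = 0 := by
      intro ω; rw [hHhat, huniv, Finset.sum_singleton, hπa]; ring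
    have : (∫ ω, Hhat a ω) = 0 := by simp [hHhat0]
    rw [this, hH0, hn, hcard1]
    simp
  -- main case : n ≥ 2
  have hn2 : (2 : ℝ) ≤ (n : ℝ) := by
    rw [hn]; exact_mod_cast hcard
  -- ξbar
  set ξbar : Ω → ℝ := fun ω => ∑ a' : A, π a' * ξ a' ω with hξbar
  have hξbarInt : Integrable ξbar :=
    integrable_finset_sum _ (fun a' _ => (hint a').const_mul (π a'))
  set δ : A → Ω → ℝ := fun b ω => ξ b ω - ξbar ω with hδ
  have hδInt : ∀ b, Integrable (δ b) := fun b => (hint b).sub hξbarInt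
  -- E|ξ b| ≤ σ
  have hEξ : ∀ b, ∫ ω, |ξ b ω| ≤ σ := fun b =>
    abs_integral_le_of_sq (ξ b) σ hσ (hint b) (hsq b) (hvar b)
  -- E|ξbar| ≤ σ
  have hEξbar : ∫ ω, |ξbar ω| ≤ σ := by
    have h1 : ∫ ω, |ξbar ω| ≤ ∫ ω, ∑ a' : A, π a' * |ξ a' ω| := by
      apply integral_mono hξbarInt.abs
        (integrable_finset_sum _ (fun a' _ => (hint a').abs.const_mul (π a')))
      intro ω
      calc |ξbar ω| ≤ ∑ a' : A, |π a' * ξ a' ω| := Finset.abs_sum_le_sum_abs _ _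
        _ = ∑ a' : A, π a' * |ξ a' ω| := by
            refine Finset.sum_congr rfl fun a' _ => ?_
            rw [abs_mul, abs_of_nonneg (hπ a')]
    have h2 : ∫ ω, ∑ a' : A, π a' * |ξ a' ω| = ∑ a' : A, π a' * ∫ ω, |ξ a' ω| := by
      rw [integral_finset_sum _ (fun a' _ => (hint a').abs.const_mul (π a'))]
      exact Finset.sum_congr rfl fun a' _ => integral_const_mul _ _
    have h3 : ∑ a' : A, π a' * ∫ ω, |ξ a' ω| ≤ ∑ a' : A, π a' * σ := by
      exact Finset.sum_le_sum fun a' _ =>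
        mul_le_mul_of_nonneg_left (hEξ a') (hπ a')
    have h4 : ∑ a' : A, π a' * σ = σ := by rw [← Finset.sum_mul, hsum, one_mul]
    linarith
  -- E|δ b| ≤ 2σ
  have hEδ : ∀ b, ∫ ω, |δ b ω| ≤ 2 * σ := by
    intro b
    have h1 : ∫ ω, |δ b ω| ≤ ∫ ω, (|ξ b ω| + |ξbar ω|) := by
      apply integral_mono (hδInt b).abs ((hint b).abs.add hξbarInt.abs)
      intro ω
      exact abs_sub _ _
    rw [integral_add (hint b).abs hξbarInt.abs] at h1
    linarith [hEξ b, hEξbar]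
  -- pointwise bound
  set g : Ω → ℝ := fun ω =>
    (1 - π a) * |δ a ω| + π a * ∑ a' ∈ univ.erase a, |δ a' ω| with hg
  have hgInt : Integrable g := by
    apply Integrable.add ((hδInt a).abs.const_mul _)
    exact (integrable_finset_sum _ (fun a' _ => (hδInt a').abs)).const_mul _
  have hxdiff : ∀ b ω, (utilde b ω - ubartilde ω) - (u b - ubar) = δ b ω := by
    intro b ω
    rw [hubartilde, hubar, hutilde]
    simp only [hδ, hξbar, hutilde, mul_add, Finset.sum_add_distrib]
    ring
  have hpt : ∀ ω, |Hhat a ω - H a| ≤ g ω := by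
    intro ω
    have hsplit : ∀ (f : A → ℝ), ∑ a' : A, f a' = f a + ∑ a' ∈ univ.erase a, f a' :=
      fun f => (Finset.add_sum_erase univ f (mem_univ a)).symm
    rw [hHhat, hH, hsplit (fun a' => max (utilde a' ω - ubartilde ω) 0),
        hsplit (fun a' => max (u a' - ubar) 0)]
    have key : ∀ b, |max (utilde b ω - ubartilde ω) 0 - max (u b - ubar) 0| ≤ |δ b ω| := by
      intro b
      calc |max (utilde b ω - ubartilde ω) 0 - max (u b - ubar) 0|
          ≤ |(utilde b ω - ubartilde ω) - (u b - ubar)| := abs_max_sub_max_le_abs _ _ _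
        _ = |δ b ω| := by rw [hxdiff b ω]
    have hsumbound : |∑ a' ∈ univ.erase a,
        (max (utilde a' ω - ubartilde ω) 0 - max (u a' - ubar) 0)|
        ≤ ∑ a' ∈ univ.erase a, |δ a' ω| := by
      calc _ ≤ ∑ a' ∈ univ.erase a,
            |max (utilde a' ω - ubartilde ω) 0 - max (u a' - ubar) 0| :=
          Finset.abs_sum_le_sum_abs _ _
        _ ≤ _ := Finset.sum_le_sum fun a' _ => key a'
    have expand :
        (max (utilde a ω - ubartilde ω) 0 -
          π a * (max (utilde a ω - ubartilde ω) 0 +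
            ∑ a' ∈ univ.erase a, max (utilde a' ω - ubartilde ω) 0)) -
        (max (u a - ubar) 0 -
          π a * (max (u a - ubar) 0 + ∑ a' ∈ univ.erase a, max (u a' - ubar) 0))
        = (1 - π a) * (max (utilde a ω - ubartilde ω) 0 - max (u a - ubar) 0)
          - π a * ∑ a' ∈ univ.erase a,
              (max (utilde a' ω - ubartilde ω) 0 - max (u a' - ubar) 0) := by
      rw [Finset.sum_sub_distrib]; ring
    rw [expand]
    have h1 : |(1 - π a) * (max (utilde a ω - ubartilde ω) 0 - max (u a - ubar) 0)|
        ≤ (1 - π a) * |δ a ω| := by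
      rw [abs_mul, abs_of_nonneg (by linarith [hπle a])]
      exact mul_le_mul_of_nonneg_left (key a) (by linarith [hπle a])
    have h2 : |π a * ∑ a' ∈ univ.erase a,
        (max (utilde a' ω - ubartilde ω) 0 - max (u a' - ubar) 0)|
        ≤ π a * ∑ a' ∈ univ.erase a, |δ a' ω| := by
      rw [abs_mul, abs_of_nonneg (hπ a)]
      exact mul_le_mul_of_nonneg_left hsumbound (hπ a)
    calc _ ≤ |(1 - π a) * (max (utilde a ω - ubartilde ω) 0 - max (u a - ubar) 0)|
          + |π a * ∑ a' ∈ univ.erase a,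
              (max (utilde a' ω - ubartilde ω) 0 - max (u a' - ubar) 0)| :=
        abs_sub _ _
      _ ≤ g ω := by rw [hg]; dsimp only; linarith
  -- integrate
  have hre : (∫ ω, Hhat a ω) - H a = ∫ ω, (Hhat a ω - H a) := by
    rw [integral_sub (hHhatInt a) (integrable_const _), integral_const]
    simp
  rw [hre]
  have hcarderase : ((univ.erase a).card : ℝ) = (n : ℝ) - 1 := by
    rw [Finset.card_erase_of_mem (mem_univ a), Finset.card_univ, ← hn]
    have : 1 ≤ n := by omega
    push_cast [Nat.cast_sub this]
    ring
  have hgint : ∫ ω, g ω ≤ (1 - π a) * (2 * σ) + π a * (((n : ℝ) - 1) * (2 * σ)) := by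
    rw [hg]
    rw [integral_add ((hδInt a).abs.const_mul _)
        ((integrable_finset_sum _ (fun a' _ => (hδInt a').abs)).const_mul _),
        integral_const_mul, integral_const_mul,
        integral_finset_sum _ (fun a' _ => (hδInt a').abs)]
    have hb1 : (1 - π a) * ∫ ω, |δ a ω| ≤ (1 - π a) * (2 * σ) :=
      mul_le_mul_of_nonneg_left (hEδ a) (by linarith [hπle a])
    have hb2 : ∑ a' ∈ univ.erase a, ∫ ω, |δ a' ω| ≤ ((n : ℝ) - 1) * (2 * σ) := by
      calc ∑ a' ∈ univ.erase a, ∫ ω, |δ a' ω|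
          ≤ ∑ _a' ∈ univ.erase a, 2 * σ := Finset.sum_le_sum fun a' _ => hEδ a'
        _ = ((univ.erase a).card : ℝ) * (2 * σ) := by rw [Finset.sum_const, nsmul_eq_mul]
        _ = ((n : ℝ) - 1) * (2 * σ) := by rw [hcarderase]
    have hb2' : π a * ∑ a' ∈ univ.erase a, ∫ ω, |δ a' ω|
        ≤ π a * (((n : ℝ) - 1) * (2 * σ)) :=
      mul_le_mul_of_nonneg_left hb2 (hπ a)
    linarith
  calc |∫ ω, (Hhat a ω - H a)| ≤ ∫ ω, |Hhat a ω - H a| := by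
        simpa [Real.norm_eq_abs] using
          norm_integral_le_integral_norm (fun ω => Hhat a ω - H a)
    _ ≤ ∫ ω, g ω := integral_mono ((hHhatInt a).sub (integrable_const _)).abs hgInt hpt
    _ ≤ (1 - π a) * (2 * σ) + π a * (((n : ℝ) - 1) * (2 * σ)) := hgint
    _ ≤ 2 * ((n : ℝ) - 1) * σ := by
        nlinarith [mul_nonneg (mul_nonneg hσ (sub_nonneg.2 (hπle a)))
          (by linarith : (0:ℝ) ≤ (n:ℝ) - 2)]
end

section
/- Discrete Riccati comparison lemma: let (y_t) be a nonnegative real sequence satisfying y_{t+1} ≤ y_t − c·η_t·y_t² + C·η_t² for all t, with η_t = c₀/(t+t₀)^{2/3}, constants c, C, c₀ > 0, t₀ ≥ 1. Then y_t = O(t^{−1/3}); equivalently y_t² = O(t^{−2/3}). -/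
set_option maxHeartbeats 1000000

lemma cube_rpow {s : ℝ} (hs : 0 ≤ s) : (s ^ ((1:ℝ)/3)) ^ (3:ℕ) = s := by
  rw [← Real.rpow_natCast (s ^ ((1:ℝ)/3)) 3, ← Real.rpow_mul hs]
  norm_num

lemma sq_rpow {s : ℝ} (hs : 0 ≤ s) : s ^ ((2:ℝ)/3) = (s ^ ((1:ℝ)/3)) ^ (2:ℕ) := by
  rw [← Real.rpow_natCast (s ^ ((1:ℝ)/3)) 2, ← Real.rpow_mul hs]
  norm_num

lemma mvt_key {a b : ℝ} (ha : 1 ≤ a) (hab : a ≤ b) (h : b^3 = a^3+1) :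
    1/a - 1/b ≤ 1/(3*a^4) ∧ 1/(14*a^4) ≤ 1/a - 1/b := by
  have ha0 : 0 < a := by linarith
  have hb0 : 0 < b := by linarith
  have hba : 0 ≤ b - a := by linarith
  have hb2 : b ≤ 2*a := by nlinarith [sq_nonneg (b - 2*a), sq_nonneg (b + 2*a), sq_nonneg b]
  have key : (b - a) * (a^2 + a*b + b^2) = 1 := by linear_combination h
  have hup : (b - a) * (3*a^2) ≤ 1 := by
    nlinarith [mul_nonneg hba (mul_nonneg ha0.le (sub_nonneg.2 hab)),
      mul_nonneg hba (mul_nonneg (sub_nonneg.2 hab) (by linarith : (0:ℝ) ≤ b + a))]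
  have hlo : 1 ≤ (b - a) * (7*a^2) := by
    nlinarith [mul_nonneg hba (mul_nonneg ha0.le (sub_nonneg.2 hb2)),
      mul_nonneg hba (mul_nonneg (sub_nonneg.2 hb2) (by linarith : (0:ℝ) ≤ 2*a + b))]
  constructor
  · rw [div_sub_div _ _ (ne_of_gt ha0) (ne_of_gt hb0),
      div_le_div_iff₀ (by positivity) (by positivity)]
    nlinarith [mul_le_mul_of_nonneg_left hup (sq_nonneg a),
      mul_le_mul_of_nonneg_left hab ha0.le, sq_nonneg a]
  · rw [div_sub_div _ _ (ne_of_gt ha0) (ne_of_gt hb0),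
      div_le_div_iff₀ (by positivity) (by positivity)]
    nlinarith [mul_le_mul_of_nonneg_left hlo (by positivity : (0:ℝ) ≤ 2*a^2),
      mul_le_mul_of_nonneg_left hb2 ha0.le]

lemma cube_le_cube {x y : ℝ} (hx : 0 ≤ x) (hy : 0 ≤ y) (h : x^3 ≤ y^3) : x ≤ y := by
  by_contra hlt
  push_neg at hlt
  nlinarith [pow_lt_pow_left₀ hlt hy (by norm_num : 3 ≠ 0)]

theorem discrete_riccati_comparison
    (y η : ℕ → ℝ) (c C c₀ : ℝ) (t₀ : ℝ)
    (hc : 0 < c) (hC : 0 < C) (hc₀ : 0 < c₀) (ht₀ : 1 ≤ t₀)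
    (hy : ∀ t, 0 ≤ y t)
    (hη : ∀ t, η t = c₀ / ((t : ℝ) + t₀) ^ ((2 : ℝ) / 3))
    (hrec : ∀ t, y (t + 1) ≤ y t - c * η t * y t ^ 2 + C * η t ^ 2) :
    ∃ K : ℝ, 0 < K ∧ ∀ t : ℕ, 1 ≤ t → y t ≤ K / (t : ℝ) ^ ((1 : ℝ) / 3) := by
  have ht₀0 : (0:ℝ) < t₀ := by linarith
  obtain ⟨a, ha⟩ : ∃ a : ℕ → ℝ, ∀ t, a t = ((t:ℝ) + t₀) ^ ((1:ℝ)/3) :=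
    ⟨_, fun _ => rfl⟩
  have hs1 : ∀ t : ℕ, (1:ℝ) ≤ (t:ℝ) + t₀ := by
    intro t; have : (0:ℝ) ≤ (t:ℝ) := Nat.cast_nonneg t; linarith
  have hs0 : ∀ t : ℕ, (0:ℝ) < (t:ℝ) + t₀ := fun t => lt_of_lt_of_le one_pos (hs1 t)
  have ha1 : ∀ t, 1 ≤ a t := by
    intro t
    rw [ha t]
    calc (1:ℝ) = 1 ^ ((1:ℝ)/3) := (Real.one_rpow _).symm
      _ ≤ _ := Real.rpow_le_rpow zero_le_one (hs1 t) (by norm_num)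
  have ha0 : ∀ t, 0 < a t := fun t => lt_of_lt_of_le one_pos (ha1 t)
  have hacube : ∀ t : ℕ, (a t)^(3:ℕ) = (t:ℝ) + t₀ := by
    intro t; rw [ha t]; exact cube_rpow (hs0 t).le
  have hcube_succ : ∀ t, (a (t+1))^(3:ℕ) = (a t)^(3:ℕ) + 1 := by
    intro t; rw [hacube, hacube]; push_cast; ring
  have hamono : ∀ t, a t ≤ a (t+1) := by
    intro t; rw [ha t, ha (t+1)]
    exact Real.rpow_le_rpow (hs0 t).le (by push_cast; linarith) (by norm_num)
  have hηa : ∀ t, η t = c₀ / (a t)^(2:ℕ) := by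
    intro t; rw [hη t, ha t, sq_rpow (hs0 t).le]
  have hη0 : ∀ t, 0 < η t := by
    intro t; rw [hηa t]; exact div_pos hc₀ (pow_pos (ha0 t) 2)
  -- uniform bound on y
  obtain ⟨B, hB⟩ : ∃ B : ℝ, B = y 0 + 14 * C * c₀ ^ 2 := ⟨_, rfl⟩
  have hB0 : 0 < B := by
    rw [hB]
    have h0 := hy 0
    have h1 : (0:ℝ) < 14*C*c₀^2 := by positivity
    linarith
  have hbound : ∀ t, y t ≤ B := by
    have key : ∀ t, y t ≤ y 0 + 14*C*c₀^2 * (1/(a 0) - 1/(a t)) := by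
      intro t
      induction t with
      | zero => simp
      | succ n ih =>
        have h1 : y (n+1) ≤ y n + C * η n ^ 2 := by
          have h := hrec n
          nlinarith [mul_nonneg (mul_nonneg hc.le (hη0 n).le) (sq_nonneg (y n))]
        have h2 : C * η n ^ 2 = (C * c₀^2) * (1/(14*(a n)^4)) * 14 := by
          rw [hηa n]
          have := (ha0 n).ne'
          field_simp
        have h3 := (mvt_key (ha1 n) (hamono n) (hcube_succ n)).2
        have h4 : C * η n ^ 2 ≤ 14*C*c₀^2 * (1/(a n) - 1/(a (n+1))) := by
          rw [h2]
          nlinarith [mul_le_mul_of_nonneg_left h3 (by positivity : (0:ℝ) ≤ C * c₀^2)]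
        linarith
    intro t
    have h5 := key t
    have h6 : 1/(a 0) ≤ 1 := by
      rw [div_le_one (ha0 0)]; exact ha1 0
    have h7 : 0 < 1/(a t) := one_div_pos.2 (ha0 t)
    rw [hB]
    nlinarith [mul_le_mul_of_nonneg_left (by linarith : 1/(a 0) - 1/(a t) ≤ 1)
      (by positivity : (0:ℝ) ≤ 14*C*c₀^2)]
  -- choice of K
  obtain ⟨K, hK⟩ : ∃ K : ℝ,
      K = 1 + 2/(3*c*c₀) + 3*C*c₀^2 + 4*c*c₀*B^3 + 2*B*(t₀+1) := ⟨_, rfl⟩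
  have e1 : (0:ℝ) ≤ 2/(3*c*c₀) := by positivity
  have e2 : (0:ℝ) ≤ 3*C*c₀^2 := by positivity
  have e3 : (0:ℝ) ≤ 4*c*c₀*B^3 := mul_nonneg (by positivity) (pow_nonneg hB0.le 3)
  have e4 : (0:ℝ) ≤ 2*B*(t₀+1) := mul_nonneg (by linarith) (by linarith)
  have hK1 : 1 ≤ K := by rw [hK]; linarith
  have hK0 : 0 < K := by linarith
  have hKa : 2/(3*c*c₀) ≤ K := by rw [hK]; linarith
  have hKb : 3*C*c₀^2 ≤ K := by rw [hK]; linarith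
  have hKc : 4*c*c₀*B^3 ≤ K := by rw [hK]; linarith
  have hKd : 2*B*(t₀+1) ≤ K := by rw [hK]; linarith
  have cond1 : K/3 + C*c₀^2 ≤ c*c₀*K^2 := by
    have h2le : 2 ≤ 3*c*c₀*K := by
      rw [div_le_iff₀ (by positivity)] at hKa; linarith
    have h2K : 2*K ≤ 3*c*c₀*K*K := by
      calc 2*K ≤ (3*c*c₀*K)*K := mul_le_mul_of_nonneg_right h2le hK0.le
        _ = 3*c*c₀*K*K := by ring
    nlinarith [h2K]
  have cond2 : B^3 * (2*c*c₀*K + t₀ + 1) ≤ K^3 := by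
    have h1 : (2*B*(t₀+1))^3 ≤ K^3 := pow_le_pow_left₀ e4 hKd 3
    have h2 : (t₀+1) ≤ (t₀+1)^3 := by
      nlinarith [mul_nonneg (mul_nonneg ht₀0.le ht₀0.le) ht₀0.le, sq_nonneg t₀, ht₀0.le]
    have h3 : 4*c*c₀*B^3*K ≤ K*K := by
      calc 4*c*c₀*B^3*K = (4*c*c₀*B^3)*K := by ring
        _ ≤ K*K := mul_le_mul_of_nonneg_right hKc hK0.le
    have h4 : K*K ≤ K^3 := by nlinarith [hK1, hK0]
    have h5 : B^3*(t₀+1) ≤ K^3/8 := by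
      nlinarith [h1, mul_le_mul_of_nonneg_left h2 (pow_nonneg hB0.le 3)]
    nlinarith [h1, h3, h4, h5, hB0]
  -- threshold
  obtain ⟨T₀, hT₀⟩ : ∃ n : ℕ, n = ⌈2*c*c₀*K⌉₊ := ⟨_, rfl⟩
  have hT₀ge : 2*c*c₀*K ≤ (T₀:ℝ) + t₀ := by
    have h1 : 2*c*c₀*K ≤ (T₀:ℝ) := by rw [hT₀]; exact Nat.le_ceil _
    linarith
  have hT₀le : (T₀:ℝ) + t₀ ≤ 2*c*c₀*K + t₀ + 1 := by
    have h1 : (T₀:ℝ) < 2*c*c₀*K + 1 := by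
      rw [hT₀]; exact Nat.ceil_lt_add_one (by positivity)
    linarith
  have hBa : B * a T₀ ≤ K := by
    apply cube_le_cube (mul_nonneg hB0.le (ha0 T₀).le) hK0.le
    have h0 : (B * a T₀)^3 = B^3 * (a T₀)^(3:ℕ) := by ring
    rw [h0, hacube]
    calc B^3 * ((T₀:ℝ) + t₀) ≤ B^3 * (2*c*c₀*K + t₀ + 1) :=
          mul_le_mul_of_nonneg_left hT₀le (pow_nonneg hB0.le 3)
      _ ≤ K^3 := cond2
  -- the one-step descent
  have step : ∀ m : ℕ, T₀ ≤ m → y m ≤ K / a m → y (m+1) ≤ K / a (m+1) := by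
    intro m hTm ih
    have hA1 : 1 ≤ a m := ha1 m
    have hA0 : 0 < a m := ha0 m
    have hBb0 : 0 < a (m+1) := ha0 (m+1)
    have hsm : 2*c*c₀*K ≤ (a m)^3 := by
      rw [hacube]
      have : (T₀:ℝ) ≤ (m:ℝ) := by exact_mod_cast hTm
      linarith
    have hyA : y m * a m ≤ K := by rw [← le_div_iff₀ hA0]; exact ih
    have hy' := hy m
    have poly : y m * (a m)^4 - c*c₀*(y m)^2*(a m)^2 ≤ K*(a m)^3 - c*c₀*K^2 := by
      have hf1 : 0 ≤ K - y m * a m := by linarith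
      have hf2 : 0 ≤ (a m)^3 - c*c₀*(K + y m * a m) := by
        have hh : c*c₀*(K + y m * a m) ≤ c*c₀*(2*K) :=
          mul_le_mul_of_nonneg_left (by linarith) (by positivity)
        have h2 : c*c₀*(2*K) = 2*c*c₀*K := by ring
        linarith
      nlinarith [mul_nonneg hf1 hf2]
    have st1 : y m - c * η m * (y m)^2 + C * (η m)^2
        ≤ K/(a m) - (c*c₀*K^2 - C*c₀^2)/(a m)^4 := by
      rw [hηa m]
      have hAne := hA0.ne'
      have e1' : y m - c * (c₀/(a m)^(2:ℕ)) * (y m)^2 + C * (c₀/(a m)^(2:ℕ))^2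
          = (y m * (a m)^4 - c*c₀*(y m)^2*(a m)^2 + C*c₀^2)/(a m)^4 := by
        field_simp
      have e2' : K/(a m) - (c*c₀*K^2 - C*c₀^2)/(a m)^4
          = (K*(a m)^3 - c*c₀*K^2 + C*c₀^2)/(a m)^4 := by
        field_simp
        ring
      rw [e1', e2']
      apply div_le_div_of_nonneg_right ?_ (by positivity)
      linarith
    have hmv := (mvt_key hA1 (hamono m) (hcube_succ m)).1
    have st3 : K/(a m) - K/(3*(a m)^4) ≤ K/(a (m+1)) := by
      have hh := mul_le_mul_of_nonneg_left hmv hK0.le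
      have e3' : K * (1/(a m) - 1/(a (m+1))) = K/(a m) - K/(a (m+1)) := by ring
      have e4' : K * (1/(3*(a m)^4)) = K/(3*(a m)^4) := by ring
      linarith [e3' ▸ hh, e4' ▸ hh]
    have st2 : K/(3*(a m)^4) ≤ (c*c₀*K^2 - C*c₀^2)/(a m)^4 := by
      have e5' : K/(3*(a m)^4) = (K/3)/(a m)^4 := by ring
      rw [e5']
      apply div_le_div_of_nonneg_right ?_ (by positivity)
      linarith
    calc y (m+1) ≤ y m - c * η m * (y m)^2 + C * (η m)^2 := hrec m
      _ ≤ K/(a m) - (c*c₀*K^2 - C*c₀^2)/(a m)^4 := st1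
      _ ≤ K/(a m) - K/(3*(a m)^4) := by linarith
      _ ≤ K/(a (m+1)) := st3
  -- main induction from T₀
  have main : ∀ n, y (T₀ + n) ≤ K / a (T₀ + n) := by
    intro n
    induction n with
    | zero =>
      have hb := hbound T₀
      rw [Nat.add_zero, le_div_iff₀ (ha0 T₀)]
      calc y T₀ * a T₀ ≤ B * a T₀ := mul_le_mul_of_nonneg_right hb (ha0 T₀).le
        _ ≤ K := hBa
    | succ n ih =>
      exact step (T₀ + n) (Nat.le_add_right _ _) ih
  -- conclusion
  refine ⟨K, hK0, fun t ht => ?_⟩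
  have ht0 : (0:ℝ) < (t:ℝ) := by exact_mod_cast ht
  have htp : (0:ℝ) < (t:ℝ)^((1:ℝ)/3) := Real.rpow_pos_of_pos ht0 _
  by_cases hcase : T₀ ≤ t
  · obtain ⟨n, rfl⟩ := Nat.exists_eq_add_of_le hcase
    have h1 := main n
    have h2 : (↑(T₀+n):ℝ)^((1:ℝ)/3) ≤ a (T₀+n) := by
      rw [ha]
      exact Real.rpow_le_rpow (Nat.cast_nonneg _) (by linarith) (by norm_num)
    calc y (T₀+n) ≤ K / a (T₀+n) := h1
      _ ≤ K / (↑(T₀+n):ℝ)^((1:ℝ)/3) := by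
          apply div_le_div_of_nonneg_left hK0.le ?_ h2
          exact Real.rpow_pos_of_pos (by positivity) _
  · push_neg at hcase
    have h1 : (t:ℝ)^((1:ℝ)/3) ≤ a T₀ := by
      rw [ha]
      have : (t:ℝ) ≤ (T₀:ℝ) := by exact_mod_cast hcase.le
      exact Real.rpow_le_rpow (Nat.cast_nonneg _) (by linarith) (by norm_num)
    rw [le_div_iff₀ htp]
    calc y t * (t:ℝ)^((1:ℝ)/3) ≤ B * (t:ℝ)^((1:ℝ)/3) :=
        mul_le_mul_of_nonneg_right (hbound t) htp.le
      _ ≤ B * a T₀ := mul_le_mul_of_nonneg_left h1 hB0.le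
      _ ≤ K := hBa
end

section
/- Noise-floor persistence for a drift recursion: let (g_t) be a nonnegative sequence satisfying g_{t+1} ≤ g_t − a·η_t·g_t^{3/2} + b·σ·η_t·g_t^{1/2} + C·η_t², with constants a, b, C > 0, σ ≥ 0, and step sizes η_t > 0 with ∑η_t = ∞ and ∑η_t² < ∞. Then limsup_{t→∞} g_t ≤ (b/a)·σ. -/
open Filter

theorem noise_floor_persistence
    (g η : ℕ → ℝ) (a b C σ : ℝ)
    (ha : 0 < a) (hb : 0 < b) (hC : 0 < C) (hσ : 0 ≤ σ)
    (hg : ∀ t, 0 ≤ g t) (hηpos : ∀ t, 0 < η t)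
    (hηdiv : ¬ Summable η) (hηsq : Summable (fun t => η t ^ 2))
    (hrec : ∀ t, g (t + 1) ≤
      g t - a * η t * g t ^ ((3 : ℝ) / 2) + b * σ * η t * g t ^ ((1 : ℝ) / 2)
        + C * η t ^ 2) :
    Filter.limsup g Filter.atTop ≤ (b / a) * σ := by
  set L : ℝ := (b / a) * σ with hLdef
  clear_value L
  have hL : 0 ≤ L := by rw [hLdef]; exact mul_nonneg (div_nonneg hb.le ha.le) hσ
  have hbσ : b * σ = a * L := by
    rw [hLdef]; field_simp
  -- rewrite the powers via sqrt
  have hsq : ∀ t, g t ^ ((1 : ℝ) / 2) = Real.sqrt (g t) := fun t =>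
    (Real.sqrt_eq_rpow (g t)).symm
  have h32 : ∀ t, g t ^ ((3 : ℝ) / 2) = g t * Real.sqrt (g t) := by
    intro t
    rcases eq_or_lt_of_le (hg t) with h | h
    · rw [← h]
      rw [Real.zero_rpow (by norm_num), Real.sqrt_zero, mul_zero]
    · rw [show (3 : ℝ) / 2 = 1 + 1 / 2 by norm_num, Real.rpow_add h, Real.rpow_one,
        ← Real.sqrt_eq_rpow]
  have hrec' : ∀ t, g (t + 1) ≤
      g t - a * η t * (g t * Real.sqrt (g t)) + b * σ * η t * Real.sqrt (g t)
        + C * η t ^ 2 := by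
    intro t
    have := hrec t
    rwa [h32 t, hsq t] at this
  -- η tends to 0
  have hη0 : Tendsto η atTop (nhds 0) := by
    have h2 : Tendsto (fun t => η t ^ 2) atTop (nhds 0) := hηsq.tendsto_atTop_zero
    have h3 : Tendsto (fun t => Real.sqrt (η t ^ 2)) atTop (nhds (Real.sqrt 0)) :=
      (Real.continuous_sqrt.tendsto 0).comp h2
    have he : (fun t => Real.sqrt (η t ^ 2)) = η := by
      funext t; rw [Real.sqrt_sq (hηpos t).le]
    rwa [he, Real.sqrt_zero] at h3
  -- divergence of partial sums of η
  have hdiv : Tendsto (fun n => ∑ t ∈ Finset.range n, η t) atTop atTop :=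
    not_not.mp ((not_congr (summable_iff_not_tendsto_nat_atTop_of_nonneg
      (fun t => (hηpos t).le))).mp hηdiv)
  -- total sum of squares
  set B : ℝ := ∑' t, η t ^ 2 with hBdef
  clear_value B
  have hIcoB : ∀ s : Finset ℕ, ∑ t ∈ s, η t ^ 2 ≤ B := by
    rw [hBdef]
    exact fun s => Summable.sum_le_tsum s (fun i _ => sq_nonneg _) hηsq
  -- main eventual claim
  have main : ∀ ε : ℝ, 0 < ε → ∀ᶠ t in atTop, g t ≤ L + ε := by
    intro ε hε
    have hε2 : (0 : ℝ) < ε / 2 := half_pos hε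
    have hm0 : 0 < L + ε / 2 := by linarith
    obtain ⟨c, hcdef⟩ : ∃ c : ℝ, c = a * (ε / 2) * Real.sqrt (ε / 2) := ⟨_, rfl⟩
    have hc0 : 0 < c := by
      rw [hcdef]
      exact mul_pos (mul_pos ha hε2) (Real.sqrt_pos.mpr hε2)
    -- drift lemma
    have drift : ∀ t, L + ε / 2 ≤ g t → g (t + 1) ≤ g t - c * η t + C * η t ^ 2 := by
      intro t ht
      have h1 := hrec' t
      have hεg : ε / 2 ≤ g t := by linarith
      have hs : Real.sqrt (ε / 2) ≤ Real.sqrt (g t) := Real.sqrt_le_sqrt hεg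
      have hag : a * (ε / 2) ≤ a * g t - b * σ := by
        rw [hbσ]; nlinarith
      have hkey : c ≤ Real.sqrt (g t) * (a * g t - b * σ) := by
        calc c = Real.sqrt (ε / 2) * (a * (ε / 2)) := by rw [hcdef]; ring
          _ ≤ Real.sqrt (g t) * (a * g t - b * σ) :=
            mul_le_mul hs hag (mul_nonneg ha.le hε2.le) (Real.sqrt_nonneg _)
      have hkey2 : c * η t ≤ Real.sqrt (g t) * (a * g t - b * σ) * η t :=
        mul_le_mul_of_nonneg_right hkey (hηpos t).le
      nlinarith [h1, hkey2]
    -- increase lemma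
    have incr : ∀ t, g t ≤ L + ε / 2 →
        g (t + 1) ≤ L + ε / 2 + b * σ * η t * Real.sqrt (L + ε / 2) + C * η t ^ 2 := by
      intro t ht
      have h1 := hrec' t
      have hneg : 0 ≤ a * η t * (g t * Real.sqrt (g t)) :=
        mul_nonneg (mul_nonneg ha.le (hηpos t).le)
          (mul_nonneg (hg t) (Real.sqrt_nonneg _))
      have hmon : b * σ * η t * Real.sqrt (g t) ≤
          b * σ * η t * Real.sqrt (L + ε / 2) :=
        mul_le_mul_of_nonneg_left (Real.sqrt_le_sqrt ht)
          (mul_nonneg (mul_nonneg hb.le hσ) (hηpos t).le)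
      linarith
    -- eventual smallness conditions
    have hA : ∀ᶠ t in atTop, C * η t ≤ c := by
      have h1 : Tendsto (fun t => C * η t) atTop (nhds 0) := by
        simpa using hη0.const_mul C
      exact (h1.eventually_lt_const hc0).mono fun t ht => ht.le
    have hB2 : ∀ᶠ t in atTop,
        b * σ * η t * Real.sqrt (L + ε / 2) + C * η t ^ 2 ≤ ε / 2 := by
      have t1 : Tendsto (fun t => b * σ * η t * Real.sqrt (L + ε / 2)) atTop
          (nhds 0) := by
        simpa using (hη0.const_mul (b * σ)).mul_const (Real.sqrt (L + ε / 2))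
      have t2 : Tendsto (fun t => C * η t ^ 2) atTop (nhds 0) := by
        simpa using hηsq.tendsto_atTop_zero.const_mul C
      have t3 : Tendsto
          (fun t => b * σ * η t * Real.sqrt (L + ε / 2) + C * η t ^ 2) atTop
          (nhds 0) := by simpa using t1.add t2
      exact (t3.eventually_lt_const hε2).mono fun t ht => ht.le
    obtain ⟨T, hT⟩ := (hA.and hB2).exists_forall_of_atTop
    -- there exists t₀ ≥ T with g t₀ < L + ε/2
    have hex : ∃ t₀, T ≤ t₀ ∧ g t₀ < L + ε / 2 := by
      by_contra hcon
      push_neg at hcon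
      have hchain : ∀ n, T ≤ n →
          g n + c * (∑ t ∈ Finset.Ico T n, η t) ≤
            g T + C * (∑ t ∈ Finset.Ico T n, η t ^ 2) := by
        intro n hn
        induction n, hn using Nat.le_induction with
        | base => simp
        | succ n hn IH =>
          have hd := drift n (hcon n hn)
          rw [Finset.sum_Ico_succ_top hn, Finset.sum_Ico_succ_top hn]
          linarith
      -- contradiction with divergence
      obtain ⟨K, hK⟩ : ∃ K : ℝ,
          K = (∑ t ∈ Finset.range T, η t) + (g T + C * B) / c := ⟨_, rfl⟩
      obtain ⟨n, hn1, hn2⟩ :=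
        ((hdiv.eventually_gt_atTop K).and (eventually_ge_atTop T)).exists
      have h1 := hchain n hn2
      have h2 : ∑ t ∈ Finset.Ico T n, η t ^ 2 ≤ B := hIcoB _
      have h3 : c * (∑ t ∈ Finset.Ico T n, η t) ≤ g T + C * B := by
        have hgn := hg n
        nlinarith [h1, h2]
      have h4 : ∑ t ∈ Finset.Ico T n, η t =
          (∑ t ∈ Finset.range n, η t) - ∑ t ∈ Finset.range T, η t :=
        Finset.sum_Ico_eq_sub _ hn2
      have h5 : (∑ t ∈ Finset.Ico T n, η t) ≤ (g T + C * B) / c := by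
        rw [le_div_iff₀ hc0]
        linarith
      rw [h4] at h5
      have : (∑ t ∈ Finset.range n, η t) ≤ K := by rw [hK]; linarith
      linarith
    obtain ⟨t₀, ht₀T, ht₀⟩ := hex
    -- from t₀ on, g stays ≤ L + ε
    have stay : ∀ n, t₀ ≤ n → g n ≤ L + ε := by
      intro n hn
      induction n, hn using Nat.le_induction with
      | base => linarith
      | succ n hn IH =>
        have hTn : T ≤ n := le_trans ht₀T hn
        obtain ⟨hcA, hcB⟩ := hT n hTn
        by_cases hcase : g n ≤ L + ε / 2
        · have := incr n hcase
          linarith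
        · push_neg at hcase
          have hd := drift n hcase.le
          have : C * η n ^ 2 ≤ c * η n := by
            nlinarith [hcA, (hηpos n).le]
          linarith
    exact eventually_atTop.mpr ⟨t₀, stay⟩
  -- conclude
  have hcobdd : IsCoboundedUnder (· ≤ ·) atTop g :=
    isCoboundedUnder_le_of_le atTop (x := 0) hg
  refine le_of_forall_pos_le_add fun ε hε => ?_
  exact limsup_le_of_le hcobdd (main ε hε)
end

section
/- Constant-step noise floor: let (g_t) be a nonnegative sequence satisfying g_{t+1} ≤ g_t − a·η·g_t^{3/2} + b·σ·η·g_t^{1/2} + C·η² with a fixed step size η ∈ (0, η₀] and constants a, b, C > 0, σ ≥ 0. Then limsup_{t→∞} g_t ≤ K₁·(σ/a)·b + K₂·(C/a)^{2/3}·η^{2/3} for suitable constants K₁, K₂ depending only on a, b, C (in particular the steady-state error is O(σ) + O(η^{2/3}) in g, matching the paper's O(ση)+O(η²) claim after the substitution g ≈ y²). -/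
/-!
With `κ = aη`, `s = bσ/a` and `u = (Cη/a)^{2/3}` the recursion reads
`g' ≤ g - κ (g^{3/2} - s g^{1/2} - u^{3/2})`. Above `4(s + u)` the bracket is at least `g^{3/2}/2`,
so the sequence drops by a uniform amount until it enters `[0, 4(s + u))`. From there one step
cannot carry it above `10(s + u)`: a value `y` that large has a nonnegative successor only if
`κ √y ≤ 2`, and then the increment `κ (s g^{1/2} + u^{3/2})` of the step into `y` is at most
`4s/3 + 2u/3`. Hence `[0, 10(s + u)]` is eventually invariant.
-/

open Filter Real

namespace NoiseFloor

noncomputable def drift (s u x : ℝ) : ℝ := √x ^ 3 - s * √x - √u ^ 3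

variable {κ s u x y : ℝ}

lemma half_sqrt_pow_three_le_drift (hs : 0 ≤ s) (hu : 0 ≤ u) (hx : 4 * (s + u) ≤ x) :
    √x ^ 3 / 2 ≤ drift s u x := by
  have hX : √x ^ 2 = x := sq_sqrt (by linarith)
  have hX0 : 0 ≤ √x := sqrt_nonneg x
  have hR : 2 * √u ≤ √x := by
    rw [← sqrt_sq (zero_le_two : (0 : ℝ) ≤ 2), ← sqrt_mul (by norm_num)]
    exact sqrt_le_sqrt (by nlinarith)
  have hR0 : 0 ≤ √u := sqrt_nonneg u
  have hnoise : s * √x ≤ √x ^ 3 / 4 := by nlinarith [mul_nonneg hs hX0]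
  have hbias : √u ^ 3 ≤ √x ^ 3 / 8 := by
    have := pow_le_pow_left₀ (by positivity) hR 3
    linarith
  unfold drift
  linarith [pow_nonneg hX0 3]

lemma mul_sqrt_le_two_of_nonneg_sub_drift (hκ : 0 ≤ κ) (hs : 0 ≤ s) (hu : 0 ≤ u)
    (hy : 4 * (s + u) ≤ y) (hy0 : 0 < y) (hnext : 0 ≤ y - κ * drift s u y) : κ * √y ≤ 2 := by
  have hY : √y ^ 2 = y := sq_sqrt hy0.le
  have hdrift := mul_le_mul_of_nonneg_left (half_sqrt_pow_three_le_drift hs hu hy) hκ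
  have hpos : 0 < √y ^ 2 := by positivity
  nlinarith

lemma le_ten_mul_of_le_four_mul (hκ : 0 ≤ κ) (hs : 0 ≤ s) (hu : 0 ≤ u) (hx0 : 0 ≤ x)
    (hx : x ≤ 4 * (s + u)) (hy : y ≤ x - κ * drift s u x) (hnext : 0 ≤ y - κ * drift s u y) :
    y ≤ 10 * (s + u) := by
  by_contra! hlarge
  have hκY : κ * √y ≤ 2 :=
    mul_sqrt_le_two_of_nonneg_sub_drift hκ hs hu (by linarith) (by linarith) hnext
  have hX : √x ^ 2 = x := sq_sqrt hx0
  have hY : √y ^ 2 = y := sq_sqrt (by linarith)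
  have hR : √u ^ 2 = u := sq_sqrt hu
  have hX0 := sqrt_nonneg x
  have hY0 := sqrt_nonneg y
  have hR0 := sqrt_nonneg u
  have hXY : 3 * √x ≤ 2 * √y := by nlinarith
  have hRY : 3 * √u ≤ √y := by nlinarith
  have hnoise : κ * s * √x ≤ 4 / 3 * s := by nlinarith [mul_nonneg hκ hs]
  have hbias : κ * √u ^ 3 ≤ 2 / 3 * u := by nlinarith [mul_nonneg hκ (sq_nonneg (√u))]
  have hdrift : y ≤ x + κ * s * √x + κ * √u ^ 3 := by
    unfold drift at hy
    nlinarith [mul_nonneg hκ (pow_nonneg hX0 3)]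
  linarith

section Sequence

variable {g : ℕ → ℝ}

lemma exists_lt_of_forall_le_imp_le_sub {m c δ : ℝ} (hδ : 0 < δ) (hg : ∀ t, m ≤ g t)
    (hdesc : ∀ t, c ≤ g t → g (t + 1) ≤ g t - δ) : ∃ t, g t < c := by
  by_contra! hall
  have hlin : ∀ n : ℕ, g n ≤ g 0 - n * δ := by
    intro n
    induction n with
    | zero => simp
    | succ n ih => push_cast; linarith [hdesc n (hall n)]
  obtain ⟨n, hn⟩ := exists_nat_gt ((g 0 - m) / δ)
  rw [div_lt_iff₀ hδ] at hn
  linarith [hlin n, hg n]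

lemma limsup_le_of_forall_le_imp_succ_le {m T : ℝ} {t₀ : ℕ} (hg : ∀ t, m ≤ g t)
    (h₀ : g t₀ ≤ T) (hinv : ∀ t, g t ≤ T → g (t + 1) ≤ T) : limsup g atTop ≤ T := by
  refine limsup_le_of_le (isCoboundedUnder_le_of_le _ hg)
    (eventually_atTop.2 ⟨t₀, fun t ht => ?_⟩)
  induction t, ht using Nat.le_induction with
  | base => exact h₀
  | succ n _ ih => exact hinv n ih

theorem limsup_le_of_le_sub_drift (hκ : 0 < κ) (hs : 0 ≤ s) (hu : 0 ≤ u) (hsu : 0 < s + u)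
    (hg : ∀ t, 0 ≤ g t) (hstep : ∀ t, g (t + 1) ≤ g t - κ * drift s u (g t)) :
    limsup g atTop ≤ 10 * (s + u) := by
  have hdesc : ∀ t, 4 * (s + u) ≤ g t → g (t + 1) ≤ g t - κ / 2 * √(4 * (s + u)) ^ 3 := by
    intro t ht
    have hmono : √(4 * (s + u)) ^ 3 ≤ √(g t) ^ 3 :=
      pow_le_pow_left₀ (sqrt_nonneg _) (sqrt_le_sqrt ht) 3
    have hdrift := mul_le_mul_of_nonneg_left (half_sqrt_pow_three_le_drift hs hu ht) hκ.le
    nlinarith [hstep t]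
  have hδ : 0 < κ / 2 * √(4 * (s + u)) ^ 3 := by positivity
  obtain ⟨t₀, ht₀⟩ := exists_lt_of_forall_le_imp_le_sub hδ hg hdesc
  refine limsup_le_of_forall_le_imp_succ_le hg (t₀ := t₀) (by linarith) fun t _ => ?_
  rcases le_or_gt (4 * (s + u)) (g t) with hbig | hsmall
  · linarith [hdesc t hbig]
  · exact le_ten_mul_of_le_four_mul hκ.le hs hu (hg t) hsmall.le (hstep t)
      (by linarith [hstep (t + 1), hg (t + 2)])

end Sequence

lemma rpow_three_halves (hx : 0 ≤ x) : x ^ ((3 : ℝ) / 2) = √x ^ 3 := by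
  rw [rpow_div_two_eq_sqrt _ hx]
  norm_cast

lemma sqrt_rpow_two_thirds_pow_three (hx : 0 ≤ x) : √(x ^ ((2 : ℝ) / 3)) ^ 3 = x := by
  rw [← rpow_three_halves (by positivity), ← rpow_mul hx]
  norm_num

end NoiseFloor

open NoiseFloor in
theorem constant_step_noise_floor (a b C : ℝ) (ha : 0 < a) (hb : 0 < b) (hC : 0 < C) :
    ∃ K₁ K₂ : ℝ, 0 < K₁ ∧ 0 < K₂ ∧
      ∀ (η η₀ σ : ℝ) (g : ℕ → ℝ),
        0 < η → η ≤ η₀ → 0 ≤ σ → (∀ t, 0 ≤ g t) →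
        (∀ t, g (t + 1) ≤
          g t - a * η * g t ^ ((3 : ℝ) / 2) + b * σ * η * g t ^ ((1 : ℝ) / 2)
            + C * η ^ 2) →
        Filter.limsup g Filter.atTop ≤
          K₁ * (σ / a) * b + K₂ * (C / a) ^ ((2 : ℝ) / 3) * η ^ ((2 : ℝ) / 3) := by
  refine ⟨10, 10, by norm_num, by norm_num, fun η η₀ σ g hη _ hσ hg hrec => ?_⟩
  have hCη : 0 ≤ C / a * η := by positivity
  have hstep (t : ℕ) :
      g (t + 1) ≤ g t - a * η * drift (σ / a * b) ((C / a * η) ^ ((2 : ℝ) / 3)) (g t) := by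
    have hdrift : a * η * drift (σ / a * b) ((C / a * η) ^ ((2 : ℝ) / 3)) (g t) =
        a * η * √(g t) ^ 3 - b * σ * η * √(g t) - C * η ^ 2 := by
      rw [drift, sqrt_rpow_two_thirds_pow_three hCη]
      field_simp
    have hrec' := hrec t
    rw [rpow_three_halves (hg t), ← sqrt_eq_rpow] at hrec'
    linarith
  have hlim := limsup_le_of_le_sub_drift (by positivity) (by positivity) (by positivity)
    (by positivity) hg hstep
  rw [mul_rpow (div_pos hC ha).le hη.le] at hlim
  linarith
end
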